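/- arXiv:2311.02190 — 6 statements merged into one kernel-verified Lean document; each statement's English description precedes it below -/
import Mathlib

section
/- The GHZ₂ state does not restrict to the W-state: there are no linear maps m₁, m₂, m₃ : ℂ² → ℂ² such that W = (m₁⊗m₂⊗m₃)(e₀⊗e₀⊗e₀ + e₁⊗e₁⊗e₁). -/
open scoped BigOperators

/-- A 3-tensor in `ℂ^a ⊗ ℂ^b ⊗ ℂ^c`, given by its coordinates. -/
abbrev T3 (a b c : ℕ) : Type := Fin a → Fin b → Fin c → ℂ

/-- Restriction of 3-tensors: `t ≥ t'` iff `t' = (m₁ ⊗ m₂ ⊗ m₃) t`. -/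
def res3 {a b c a' b' c' : ℕ} (t : T3 a b c) (t' : T3 a' b' c') : Prop :=
  ∃ (m₁ : Fin a' → Fin a → ℂ) (m₂ : Fin b' → Fin b → ℂ) (m₃ : Fin c' → Fin c → ℂ),
    ∀ i j k, t' i j k = ∑ p, ∑ q, ∑ r, m₁ i p * m₂ j q * m₃ k r * t p q r

/-- The W-state `e₀⊗e₀⊗e₁ + e₀⊗e₁⊗e₀ + e₁⊗e₀⊗e₀`. -/
def W : T3 2 2 2 := fun i j k => if (i : ℕ) + (j : ℕ) + (k : ℕ) = 1 then 1 else 0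

/-- The GHZ state `e₀⊗e₀⊗e₀ + e₁⊗e₁⊗e₁`. -/
def GHZ2 : T3 2 2 2 := fun i j k => if i = j ∧ j = k then 1 else 0

/-- The unit tensor `GHZ_r = Σ_i e_i⊗e_i⊗e_i`. -/
def GHZ (r : ℕ) : T3 r r r := fun i j k => if i = j ∧ j = k then 1 else 0

lemma ghz_w_aux (a0 a1 A0 A1 b0 b1 B0 B1 c0 c1 C0 C1 : ℂ)
    (h000 : a0*b0*c0 + A0*B0*C0 = 0)
    (h001 : a0*b0*c1 + A0*B0*C1 = 1)
    (h010 : a0*b1*c0 + A0*B1*C0 = 1)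
    (h100 : a1*b0*c0 + A1*B0*C0 = 1)
    (h011 : a0*b1*c1 + A0*B1*C1 = 0)
    (h101 : a1*b0*c1 + A1*B0*C1 = 0)
    (h110 : a1*b1*c0 + A1*B1*C0 = 0)
    (h111 : a1*b1*c1 + A1*B1*C1 = 0) : False := by
  set M := a0*b0*A1*B1 + A0*B0*a1*b1 - a0*b1*A1*B0 - A0*B1*a1*b0 with hM
  have h1 : c0*C0*M = -1 := by
    linear_combination c0*C0*hM + (a1*b1*c0 + A1*B1*C0)*h000
      - (a1*b0*c0 + A1*B0*C0)*h010 - h100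
  have h2 : c1*C1*M = 0 := by
    linear_combination c1*C1*hM + (a0*b0*c1 + A0*B0*C1)*h111
      - (a1*b0*c1 + A1*B0*C1)*h011
  have hM0 : M ≠ 0 := by
    intro h
    rw [h, mul_zero] at h1
    exact absurd h1 (by norm_num)
  have h2' : (c1*C1)*M = 0 := by linear_combination h2
  have hcc : c1 = 0 ∨ C1 = 0 :=
    mul_eq_zero.mp ((mul_eq_zero.mp h2').resolve_right hM0)
  rcases hcc with hc1 | hC1
  · have hA : A0*B0*C1 = 1 := by linear_combination h001 - a0*b0*hc1
    have hne : A0*B0*C1 ≠ 0 := by rw [hA]; exact one_ne_zero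
    have hA0 : A0 ≠ 0 := left_ne_zero_of_mul (left_ne_zero_of_mul hne)
    have hB0 : B0 ≠ 0 := right_ne_zero_of_mul (left_ne_zero_of_mul hne)
    have hC1 : C1 ≠ 0 := right_ne_zero_of_mul hne
    have e011 : (A0*C1)*B1 = 0 := by linear_combination h011 - a0*b1*hc1
    have hB1 : B1 = 0 := (mul_eq_zero.mp e011).resolve_left (mul_ne_zero hA0 hC1)
    have e101 : (B0*C1)*A1 = 0 := by linear_combination h101 - a1*b0*hc1
    have hA1 : A1 = 0 := (mul_eq_zero.mp e101).resolve_left (mul_ne_zero hB0 hC1)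
    have key : a1*b1*c0 = 0 := by linear_combination h110 - B1*C0*hA1
    have contra : (1:ℂ) = 0 := by
      linear_combination h1 - c0*C0*hM - A0*B0*C0*key
        - (c0*C0*(a0*b0*B1 - a0*b1*B0))*hA1 + (c0*C0*A0*a1*b0)*hB1
    exact one_ne_zero contra
  · have hA : a0*b0*c1 = 1 := by linear_combination h001 - A0*B0*hC1
    have hne : a0*b0*c1 ≠ 0 := by rw [hA]; exact one_ne_zero
    have ha0 : a0 ≠ 0 := left_ne_zero_of_mul (left_ne_zero_of_mul hne)
    have hb0 : b0 ≠ 0 := right_ne_zero_of_mul (left_ne_zero_of_mul hne)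
    have hc1 : c1 ≠ 0 := right_ne_zero_of_mul hne
    have e011 : (a0*c1)*b1 = 0 := by linear_combination h011 - A0*B1*hC1
    have hb1 : b1 = 0 := (mul_eq_zero.mp e011).resolve_left (mul_ne_zero ha0 hc1)
    have e101 : (b0*c1)*a1 = 0 := by linear_combination h101 - A1*B0*hC1
    have ha1 : a1 = 0 := (mul_eq_zero.mp e101).resolve_left (mul_ne_zero hb0 hc1)
    have key : A1*B1*C0 = 0 := by linear_combination h110 - b1*c0*ha1
    have contra : (1:ℂ) = 0 := by
      linear_combination h1 - c0*C0*hM - a0*b0*c0*key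
        - (c0*C0*(A0*B0*b1 - A0*B1*b0))*ha1 + (c0*C0*a0*A1*B0)*hb1
    exact one_ne_zero contra

/-- GHZ₂ does not restrict to the W-state. -/
theorem GHZ2_not_restricts_to_W : ¬ res3 GHZ2 W := by
  rintro ⟨m₁, m₂, m₃, h⟩
  have e : ∀ i j k, W i j k
      = m₁ i 0 * m₂ j 0 * m₃ k 0 + m₁ i 1 * m₂ j 1 * m₃ k 1 := by
    intro i j k
    rw [h i j k]
    simp [GHZ2, Fin.sum_univ_two]
  have f : ∀ i j k, m₁ i 0 * m₂ j 0 * m₃ k 0 + m₁ i 1 * m₂ j 1 * m₃ k 1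
      = W i j k := fun i j k => (e i j k).symm
  refine ghz_w_aux (m₁ 0 0) (m₁ 1 0) (m₁ 0 1) (m₁ 1 1)
    (m₂ 0 0) (m₂ 1 0) (m₂ 0 1) (m₂ 1 1)
    (m₃ 0 0) (m₃ 1 0) (m₃ 0 1) (m₃ 1 1)
    ?_ ?_ ?_ ?_ ?_ ?_ ?_ ?_ <;>
  · first
    | (rw [f 0 0 0]; norm_num [W])
    | (rw [f 0 0 1]; norm_num [W])
    | (rw [f 0 1 0]; norm_num [W])
    | (rw [f 1 0 0]; norm_num [W])
    | (rw [f 0 1 1]; norm_num [W])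
    | (rw [f 1 0 1]; norm_num [W])
    | (rw [f 1 1 0]; norm_num [W])
    | (rw [f 1 1 1]; norm_num [W])
end

section
/- GHZ₂ degenerates to W: for every ε ≠ 0, letting m(ε) : ℂ² → ℂ² be the linear map sending e₀ ↦ ε^{-1}((e₀ + ε e₁)) and e₁ ↦ ε^{-1}(−e₀) applied in the first factor and m'(ε) sending e₀ ↦ e₀ + ε e₁, e₁ ↦ −e₀ in the second and third factors, the tensor (m(ε)⊗m'(ε)⊗m'(ε))(GHZ₂) converges to W as ε → 0. -/
open scoped BigOperators

/-- The matrix `m(ε)` sending `e₀ ↦ ε⁻¹(e₀ + ε e₁)` and `e₁ ↦ ε⁻¹(-e₀)`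
(entry `(i,p)` is the `i`-th coordinate of the image of `e_p`). -/
noncomputable def mA (ε : ℂ) : Fin 2 → Fin 2 → ℂ := fun i p =>
  if p = 0 then (if i = 0 then ε⁻¹ else 1) else (if i = 0 then -ε⁻¹ else 0)

/-- The matrix `m'(ε)` sending `e₀ ↦ e₀ + ε e₁` and `e₁ ↦ -e₀`. -/
def mB (ε : ℂ) : Fin 2 → Fin 2 → ℂ := fun i p =>
  if p = 0 then (if i = 0 then 1 else ε) else (if i = 0 then -1 else 0)

/-!
Since `m(ε) = ε⁻¹ m'(ε)` and the second column of `m'(ε)` is minus the first column of `m'(0)`,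
applying `m(ε) ⊗ m'(ε) ⊗ m'(ε)` to `GHZ₂` gives the difference quotient `ε⁻¹ (u(ε)^⊗3 - u(0)^⊗3)`
of the curve `u(ε) = e₀ + ε e₁`. Coordinatewise this is the slope at `0` of `ε ↦ ε ^ (i + j + k)`,
which tends to its derivative `(i + j + k) · 0 ^ (i + j + k - 1)`, i.e. to the `W` entry.
-/

theorem sum_mul_GHZ_apply {r a b c : ℕ} (m₁ : Fin a → Fin r → ℂ) (m₂ : Fin b → Fin r → ℂ)
    (m₃ : Fin c → Fin r → ℂ) (i : Fin a) (j : Fin b) (k : Fin c) :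
    ∑ p, ∑ q, ∑ s, m₁ i p * m₂ j q * m₃ k s * GHZ r p q s = ∑ p, m₁ i p * m₂ j p * m₃ k p := by
  refine Finset.sum_congr rfl fun p _ => ?_
  simp [GHZ, ite_and, Finset.sum_ite_eq]

theorem mA_apply_eq_inv_mul_mB {ε : ℂ} (hε : ε ≠ 0) (i p : Fin 2) :
    mA ε i p = ε⁻¹ * mB ε i p := by
  fin_cases i <;> fin_cases p <;> simp [mA, mB, hε]

theorem mB_apply_zero (ε : ℂ) (i : Fin 2) : mB ε i 0 = ε ^ (i : ℕ) := by
  fin_cases i <;> simp [mB]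

theorem mB_apply_one (ε : ℂ) (i : Fin 2) : mB ε i 1 = -(0 : ℂ) ^ (i : ℕ) := by
  fin_cases i <;> simp [mB]

theorem restrict_GHZ2_apply_eq_slope {ε : ℂ} (hε : ε ≠ 0) (i j k : Fin 2) :
    ∑ p, ∑ q, ∑ r, mA ε i p * mB ε j q * mB ε k r * GHZ2 p q r =
      slope (fun x : ℂ => x ^ ((i : ℕ) + j + k)) 0 ε := by
  rw [show GHZ2 = GHZ 2 from rfl, sum_mul_GHZ_apply, Fin.sum_univ_two, slope_def_field]
  simp only [mA_apply_eq_inv_mul_mB hε, mB_apply_zero, mB_apply_one, pow_add]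
  ring

theorem natCast_mul_zero_pow_pred (n : ℕ) :
    (n : ℂ) * 0 ^ (n - 1) = if n = 1 then 1 else 0 := by
  rcases n with _ | _ | n <;> simp

theorem W_apply_eq_deriv_pow (i j k : Fin 2) :
    W i j k = (((i : ℕ) + j + k : ℕ) : ℂ) * 0 ^ ((i : ℕ) + j + k - 1) := by
  rw [natCast_mul_zero_pow_pred]
  rfl

/-- `(m(ε) ⊗ m'(ε) ⊗ m'(ε)) GHZ₂` converges to `W` as `ε → 0` (`ε ≠ 0`),
so GHZ₂ degenerates to W. -/
theorem GHZ2_degenerates_to_W :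
    Filter.Tendsto
      (fun ε : ℂ => (fun i j k =>
          ∑ p, ∑ q, ∑ r, mA ε i p * mB ε j q * mB ε k r * GHZ2 p q r : T3 2 2 2))
      (nhdsWithin 0 {0}ᶜ) (nhds W) := by
  refine tendsto_pi_nhds.2 fun i => tendsto_pi_nhds.2 fun j => tendsto_pi_nhds.2 fun k => ?_
  have hslope : slope (fun x : ℂ => x ^ ((i : ℕ) + j + k)) 0 =ᶠ[nhdsWithin 0 {0}ᶜ]
      fun ε => ∑ p, ∑ q, ∑ r, mA ε i p * mB ε j q * mB ε k r * GHZ2 p q r :=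
    eventually_mem_nhdsWithin.mono fun ε hε => (restrict_GHZ2_apply_eq_slope hε i j k).symm
  rw [W_apply_eq_deriv_pow]
  exact (hasDerivAt_pow ((i : ℕ) + j + k) (0 : ℂ)).tendsto_slope.congr' hslope
end

section
/- W does not degenerate to GHZ₂, i.e., GHZ₂ is not in the closure of {(m₁⊗m₂⊗m₃)W : m_i linear maps ℂ² → ℂ²}. -/
open scoped BigOperators

/-- Cayley's hyperdeterminant of a 2×2×2 tensor. -/
def hdet (t : T3 2 2 2) : ℂ :=
    (t 0 0 0)^2*(t 1 1 1)^2 + (t 0 0 1)^2*(t 1 1 0)^2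
  + (t 0 1 0)^2*(t 1 0 1)^2 + (t 0 1 1)^2*(t 1 0 0)^2
  - 2*(t 0 0 0 * t 0 0 1 * t 1 1 0 * t 1 1 1
     + t 0 0 0 * t 0 1 0 * t 1 0 1 * t 1 1 1
     + t 0 0 0 * t 0 1 1 * t 1 0 0 * t 1 1 1
     + t 0 0 1 * t 0 1 0 * t 1 0 1 * t 1 1 0
     + t 0 0 1 * t 0 1 1 * t 1 1 0 * t 1 0 0
     + t 0 1 0 * t 0 1 1 * t 1 0 1 * t 1 0 0)
  + 4*(t 0 0 0 * t 0 1 1 * t 1 0 1 * t 1 1 0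
     + t 0 0 1 * t 0 1 0 * t 1 0 0 * t 1 1 1)

lemma continuous_hdet : Continuous hdet := by
  unfold hdet
  fun_prop

lemma hdet_res_W {s : T3 2 2 2} (h : res3 W s) : hdet s = 0 := by
  obtain ⟨m₁, m₂, m₃, hm⟩ := h
  have key : ∀ i j k, s i j k =
      m₁ i 0 * m₂ j 0 * m₃ k 1 + m₁ i 0 * m₂ j 1 * m₃ k 0 + m₁ i 1 * m₂ j 0 * m₃ k 0 := by
    intro i j k
    rw [hm i j k]
    simp [Fin.sum_univ_two, W]
  simp only [hdet, key]
  ring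

/-- W does not degenerate to GHZ₂: GHZ₂ is not in the closure of
`{(m₁⊗m₂⊗m₃)W : m_i : ℂ² → ℂ² linear}`. -/
theorem W_not_degenerates_to_GHZ2 :
    GHZ2 ∉ closure {s : T3 2 2 2 | res3 W s} := by
  intro h
  have hsub : {s : T3 2 2 2 | res3 W s} ⊆ hdet ⁻¹' {0} := fun s hs => hdet_res_W hs
  have hclosed : IsClosed (hdet ⁻¹' {0}) :=
    isClosed_singleton.preimage continuous_hdet
  have h0 : hdet GHZ2 = 0 := hclosed.closure_subset_iff.mpr hsub h
  simp [hdet, GHZ2] at h0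
end

section
/- The tensor rank of the W-state equals 3: R(W) = 3, where R(t) is the minimal r such that GHZ_r restricts to t. -/
open scoped BigOperators

/-- The W-state has no rank-2 decomposition: scalar algebra certificate. -/
lemma no_rank2 (a A a' A' b B b' B' c C c' C' : ℂ)
    (h000 : a*b*c + a'*b'*c' = 0)
    (h001 : a*b*C + a'*b'*C' = 1)
    (h010 : a*B*c + a'*B'*c' = 1)
    (h011 : a*B*C + a'*B'*C' = 0)
    (h100 : A*b*c + A'*b'*c' = 1)
    (h101 : A*b*C + A'*b'*C' = 0)
    (h110 : A*B*c + A'*B'*c' = 0)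
    (h111 : A*B*C + A'*B'*C' = 0) : False := by
  -- determinant of the k=0 slice is -1, of the k=1 slice is 0
  have key0 : (c*c')*((a*A' - a'*A)*(b*B' - b'*B)) = -1 := by
    linear_combination (a*b*c + a'*b'*c')*h110 - h010 - (a*B*c + a'*B'*c')*h100
  have key1 : (C*C')*((a*A' - a'*A)*(b*B' - b'*B)) = 0 := by
    linear_combination (a*b*C + a'*b'*C')*h111 - (a*B*C + a'*B'*C')*h101
  have hD : (a*A' - a'*A)*(b*B' - b'*B) ≠ 0 := by
    intro h; rw [h, mul_zero] at key0; exact absurd key0 (by norm_num)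
  have hCC : C * C' = 0 := (mul_eq_zero.mp key1).resolve_right hD
  rcases mul_eq_zero.mp hCC with hC | hC'
  · -- C = 0
    have habC : a'*b'*C' = 1 := by linear_combination h001 - a*b*hC
    have h1 : a'*B'*C' = 0 := by linear_combination h011 - a*B*hC
    have hB' : B' = 0 := by
      calc B' = B' * (a'*b'*C') := by rw [habC]; ring
        _ = b' * (a'*B'*C') := by ring
        _ = 0 := by rw [h1]; ring
    have h2 : A'*b'*C' = 0 := by linear_combination h101 - A*b*hC
    have hA' : A' = 0 := by
      calc A' = A' * (a'*b'*C') := by rw [habC]; ring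
        _ = a' * (A'*b'*C') := by ring
        _ = 0 := by rw [h2]; ring
    have h3 : A*B*c = 0 := by linear_combination h110 - B'*c'*hA'
    have h4 : A*b*c = 1 := by linear_combination h100 - b'*c'*hA'
    have hB : B = 0 := by
      calc B = B * (A*b*c) := by rw [h4]; ring
        _ = b * (A*B*c) := by ring
        _ = 0 := by rw [h3]; ring
    have : (1:ℂ) = 0 := by linear_combination -h010 + a*c*hB + a'*c'*hB'
    exact one_ne_zero this
  · -- C' = 0
    have habC : a*b*C = 1 := by linear_combination h001 - a'*b'*hC'
    have h1 : a*B*C = 0 := by linear_combination h011 - a'*B'*hC'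
    have hB : B = 0 := by
      calc B = B * (a*b*C) := by rw [habC]; ring
        _ = b * (a*B*C) := by ring
        _ = 0 := by rw [h1]; ring
    have h2 : A*b*C = 0 := by linear_combination h101 - A'*b'*hC'
    have hA : A = 0 := by
      calc A = A * (a*b*C) := by rw [habC]; ring
        _ = a * (A*b*C) := by ring
        _ = 0 := by rw [h2]; ring
    have h3 : A'*B'*c' = 0 := by linear_combination h110 - B*c*hA
    have h4 : A'*b'*c' = 1 := by linear_combination h100 - b*c*hA
    have hB' : B' = 0 := by
      calc B' = B' * (A'*b'*c') := by rw [h4]; ring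
        _ = b' * (A'*B'*c') := by ring
        _ = 0 := by rw [h3]; ring
    have : (1:ℂ) = 0 := by linear_combination -h010 + a*c*hB + a'*c'*hB'
    exact one_ne_zero this

/-- the tensor rank of the W-state equals 3:
`GHZ₃ ≥ W` and `GHZ_r ≥ W` implies `r ≥ 3`. -/
theorem rank_W_eq_three :
    res3 (GHZ 3) W ∧ ∀ r : ℕ, res3 (GHZ r) W → 3 ≤ r := by
  constructor
  · -- W = e₀⊗e₀⊗e₁ + e₀⊗e₁⊗e₀ + e₁⊗e₀⊗e₀ is itself a sum of 3 simple tensors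
    refine ⟨fun i p => ![![1,1,0],![0,0,1]] i p,
            fun j q => ![![1,0,1],![0,1,0]] j q,
            fun k r => ![![0,1,1],![1,0,0]] k r, ?_⟩
    intro i j k
    fin_cases i <;> fin_cases j <;> fin_cases k <;>
      simp [GHZ, W, Fin.sum_univ_three]
  · intro r hres
    by_contra hlt
    push_neg at hlt
    obtain ⟨m1, m2, m3, h⟩ := hres
    interval_cases r
    · have := h 0 0 1
      simp [W] at this
    · have hW : ∀ i j k : Fin 2, W i j k = m1 i 0 * m2 j 0 * m3 k 0 := by
        intro i j k
        simpa [GHZ, Fin.sum_univ_one] using h i j k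
      have h000 : m1 0 0 * m2 0 0 * m3 0 0 = 0 := by simpa [W] using (hW 0 0 0).symm
      have h001 : m1 0 0 * m2 0 0 * m3 1 0 = 1 := by simpa [W] using (hW 0 0 1).symm
      have h100 : m1 1 0 * m2 0 0 * m3 0 0 = 1 := by simpa [W] using (hW 1 0 0).symm
      have : (1:ℂ) = 0 := by
        calc (1:ℂ) = (m1 1 0 * m2 0 0 * m3 0 0) * (m1 0 0 * m2 0 0 * m3 1 0) := by
              rw [h100, h001]; ring
          _ = (m1 0 0 * m2 0 0 * m3 0 0) * (m1 1 0 * m2 0 0 * m3 1 0) := by ring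
          _ = 0 := by rw [h000]; ring
      exact one_ne_zero this
    · have hW : ∀ i j k : Fin 2, W i j k =
          m1 i 0 * m2 j 0 * m3 k 0 + m1 i 1 * m2 j 1 * m3 k 1 := by
        intro i j k
        simpa [GHZ, Fin.sum_univ_two] using h i j k
      exact no_rank2 (m1 0 0) (m1 1 0) (m1 0 1) (m1 1 1)
        (m2 0 0) (m2 1 0) (m2 0 1) (m2 1 1)
        (m3 0 0) (m3 1 0) (m3 0 1) (m3 1 1)
        (by simpa [W] using (hW 0 0 0).symm)
        (by simpa [W] using (hW 0 0 1).symm)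
        (by simpa [W] using (hW 0 1 0).symm)
        (by simpa [W] using (hW 0 1 1).symm)
        (by simpa [W] using (hW 1 0 0).symm)
        (by simpa [W] using (hW 1 0 1).symm)
        (by simpa [W] using (hW 1 1 0).symm)
        (by simpa [W] using (hW 1 1 1).symm)
end

section
/- The subrank of the W-state equals 1: Q(W) = 1, i.e. W restricts to GHZ₁ (a nonzero product tensor) but W does not restrict to GHZ₂. -/
open scoped BigOperators

/-- the subrank of the W-state equals 1:
`W ≥ GHZ₁` but `W ≱ GHZ₂`. -/
theorem subrank_W_eq_one :
    res3 W (GHZ 1) ∧ ¬ res3 W (GHZ 2) := by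
  constructor
  · refine ⟨fun _ p => if p = 0 then 1 else 0, fun _ p => if p = 0 then 1 else 0,
      fun _ p => if p = 1 then 1 else 0, ?_⟩
    intro i j k
    fin_cases i; fin_cases j; fin_cases k
    simp [GHZ, W, Fin.sum_univ_two]
  · rintro ⟨m₁, m₂, m₃, h⟩
    have h000 := h 0 0 0
    have h001 := h 0 0 1
    have h010 := h 0 1 0
    have h011 := h 0 1 1
    have h100 := h 1 0 0
    have h101 := h 1 0 1
    have h110 := h 1 1 0
    have h111 := h 1 1 1
    simp [GHZ, W, Fin.sum_univ_two] at h000 h001 h010 h011 h100 h101 h110 h111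
    have hA : ((m₁ 0 0 * m₁ 1 1 - m₁ 1 0 * m₁ 0 1) * (m₂ 0 0 * m₂ 1 1 - m₂ 1 0 * m₂ 0 1)) * (m₃ 0 0)^2 = 0 := by
      linear_combination (m₁ 0 0 * m₂ 0 0 * m₃ 0 1 + m₁ 0 0 * m₂ 0 1 * m₃ 0 0 + m₁ 0 1 * m₂ 0 0 * m₃ 0 0) * h110 - (m₁ 1 0 * m₂ 0 0 * m₃ 0 1 + m₁ 1 0 * m₂ 0 1 * m₃ 0 0 + m₁ 1 1 * m₂ 0 0 * m₃ 0 0) * h010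
    have hB : ((m₁ 0 0 * m₁ 1 1 - m₁ 1 0 * m₁ 0 1) * (m₂ 0 0 * m₂ 1 1 - m₂ 1 0 * m₂ 0 1)) * (m₃ 1 0)^2 = 0 := by
      linear_combination (m₁ 1 0 * m₂ 1 0 * m₃ 1 1 + m₁ 1 0 * m₂ 1 1 * m₃ 1 0 + m₁ 1 1 * m₂ 1 0 * m₃ 1 0) * h001 - (m₁ 1 0 * m₂ 0 0 * m₃ 1 1 + m₁ 1 0 * m₂ 0 1 * m₃ 1 0 + m₁ 1 1 * m₂ 0 0 * m₃ 1 0) * h011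
    have hU : (m₁ 0 0 * m₂ 0 0 * m₃ 0 1 + m₁ 0 0 * m₂ 0 1 * m₃ 0 0 + m₁ 0 1 * m₂ 0 0 * m₃ 0 0) + (m₁ 0 0 * m₂ 0 0 * m₃ 1 1 + m₁ 0 0 * m₂ 0 1 * m₃ 1 0 + m₁ 0 1 * m₂ 0 0 * m₃ 1 0) = 1 := by linear_combination -h000 - h001
    have hV : (m₁ 1 0 * m₂ 1 0 * m₃ 0 1 + m₁ 1 0 * m₂ 1 1 * m₃ 0 0 + m₁ 1 1 * m₂ 1 0 * m₃ 0 0) + (m₁ 1 0 * m₂ 1 0 * m₃ 1 1 + m₁ 1 0 * m₂ 1 1 * m₃ 1 0 + m₁ 1 1 * m₂ 1 0 * m₃ 1 0) = 1 := by linear_combination -h110 - h111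
    have hS : (m₁ 0 0 * m₂ 1 0 * m₃ 0 1 + m₁ 0 0 * m₂ 1 1 * m₃ 0 0 + m₁ 0 1 * m₂ 1 0 * m₃ 0 0) + (m₁ 0 0 * m₂ 1 0 * m₃ 1 1 + m₁ 0 0 * m₂ 1 1 * m₃ 1 0 + m₁ 0 1 * m₂ 1 0 * m₃ 1 0) = 0 := by linear_combination -h010 - h011
    have hX : ((m₁ 0 0 * m₁ 1 1 - m₁ 1 0 * m₁ 0 1) * (m₂ 0 0 * m₂ 1 1 - m₂ 1 0 * m₂ 0 1)) * (m₃ 0 0 + m₃ 1 0)^2 = -1 := by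
      linear_combination (-((m₁ 1 0 * m₂ 1 0 * m₃ 0 1 + m₁ 1 0 * m₂ 1 1 * m₃ 0 0 + m₁ 1 1 * m₂ 1 0 * m₃ 0 0) + (m₁ 1 0 * m₂ 1 0 * m₃ 1 1 + m₁ 1 0 * m₂ 1 1 * m₃ 1 0 + m₁ 1 1 * m₂ 1 0 * m₃ 1 0))) * hU - hV + ((m₁ 1 0 * m₂ 0 0 * m₃ 0 1 + m₁ 1 0 * m₂ 0 1 * m₃ 0 0 + m₁ 1 1 * m₂ 0 0 * m₃ 0 0) + (m₁ 1 0 * m₂ 0 0 * m₃ 1 1 + m₁ 1 0 * m₂ 0 1 * m₃ 1 0 + m₁ 1 1 * m₂ 0 0 * m₃ 1 0)) * hS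
    have h2 : ((m₁ 0 0 * m₁ 1 1 - m₁ 1 0 * m₁ 0 1) * (m₂ 0 0 * m₂ 1 1 - m₂ 1 0 * m₂ 0 1)) * (m₃ 0 0 * m₃ 1 0) * 2 = -1 := by linear_combination hX - hA - hB
    have : (1:ℂ) = 0 := by
      linear_combination (4 * ((m₁ 0 0 * m₁ 1 1 - m₁ 1 0 * m₁ 0 1) * (m₂ 0 0 * m₂ 1 1 - m₂ 1 0 * m₂ 0 1)) * (m₃ 1 0)^2) * hA - (2 * ((m₁ 0 0 * m₁ 1 1 - m₁ 1 0 * m₁ 0 1) * (m₂ 0 0 * m₂ 1 1 - m₂ 1 0 * m₂ 0 1)) * (m₃ 0 0 * m₃ 1 0) - 1) * h2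
    exact one_ne_zero this
end

section
/- The border rank of W is 2: W lies in the closure of the set of tensors of rank at most 2 in ℂ²⊗ℂ²⊗ℂ², but W itself has rank 3, hence border rank strictly less than rank. -/
open scoped BigOperators

/-- The set of 3-tensors in `ℂ²⊗ℂ²⊗ℂ²` of tensor rank at most `r`:
sums of `r` simple tensors. -/
def RankLE (r : ℕ) : Set (T3 2 2 2) :=
  {t | ∃ a b c : Fin r → Fin 2 → ℂ,
    ∀ i j k, t i j k = ∑ l, a l i * b l j * c l k}

/-!
For `ε ≠ 0` the rank-2 tensor `ε⁻¹ ((e₀ + ε e₁)^{⊗3} - e₀^{⊗3})` vanishes at `(0,0,0)` and has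
coordinate `ε ^ (i + j + k - 1)` at every other index `(i,j,k)`, so it tends to `W` as `ε → 0`.

If `t = ∑_{l < n} a_l ⊗ b_l ⊗ c_l` in `ℂⁿ ⊗ ℂⁿ ⊗ ℂ²`, its slices are `S_k = A D_k B` with `D_k`
diagonal. When `S₀` is invertible, `S₁ S₀⁻¹ S₁ = A D₁ D₀⁻¹ D₁ B` is again of this form, so it
vanishes only if `D₁` and hence `S₁` does. For `W`, `S₀` is the swap matrix and `S₁ = e₀ e₀ᵀ`,
so `S₁ S₀⁻¹ S₁ = 0 ≠ S₁`, and `W` has no decomposition of length 2.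
-/

open Matrix Topology

theorem Matrix.inv_mul_diagonal_mul {K n : Type*} [Field K] [Fintype n] [DecidableEq n]
    {A B : Matrix n n K} {d : n → K} (hA : IsUnit A.det) (hB : IsUnit B.det) (hd : ∀ i, d i ≠ 0) :
    (A * diagonal d * B)⁻¹ = B⁻¹ * diagonal d⁻¹ * A⁻¹ := by
  apply inv_eq_left_inv
  calc B⁻¹ * diagonal d⁻¹ * A⁻¹ * (A * diagonal d * B)
      = B⁻¹ * (diagonal d⁻¹ * diagonal d) * B := by
        simp only [mul_assoc, nonsing_inv_mul_cancel_left _ _ hA]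
    _ = 1 := by simp [diagonal_mul_diagonal, hd, nonsing_inv_mul _ hB]

theorem Matrix.mul_diagonal_mul_eq_zero_of_mul_inv_mul_eq_zero {K n : Type*} [Field K]
    [Fintype n] [DecidableEq n] {A B : Matrix n n K} {d₀ d₁ : n → K}
    (h₀ : (A * diagonal d₀ * B).det ≠ 0)
    (h : A * diagonal d₁ * B * (A * diagonal d₀ * B)⁻¹ * (A * diagonal d₁ * B) = 0) :
    A * diagonal d₁ * B = 0 := by
  rw [det_mul, det_mul, det_diagonal, mul_ne_zero_iff, mul_ne_zero_iff,
    Finset.prod_ne_zero_iff] at h₀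
  obtain ⟨⟨hA, hd₀⟩, hB⟩ := h₀
  replace hd₀ : ∀ i, d₀ i ≠ 0 := fun i => hd₀ i (Finset.mem_univ i)
  have hsq : A * (diagonal d₁ * diagonal d₀⁻¹ * diagonal d₁) * B = 0 := by
    rw [← h, inv_mul_diagonal_mul hA.isUnit hB.isUnit hd₀]
    simp only [mul_assoc, nonsing_inv_mul_cancel_left _ _ hA.isUnit,
      mul_nonsing_inv_cancel_left _ _ hB.isUnit]
  have hdiag : diagonal d₁ * diagonal d₀⁻¹ * diagonal d₁ = 0 := by
    simpa only [mul_assoc, nonsing_inv_mul_cancel_left _ _ hA.isUnit, mul_nonsing_inv _ hB.isUnit,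
      mul_one, mul_zero, zero_mul] using congrArg (fun M => A⁻¹ * M * B⁻¹) hsq
  rw [diagonal_mul_diagonal, diagonal_mul_diagonal, diagonal_eq_zero] at hdiag
  have hd₁ : d₁ = 0 := by
    funext i
    simpa [hd₀ i] using congrFun hdiag i
  simp [hd₁]

theorem mem_closure_of_continuousAt_of_forall_ne {X Y : Type*} [TopologicalSpace X]
    [TopologicalSpace Y] {f : X → Y} {x : X} [(𝓝[≠] x).NeBot] {s : Set Y}
    (hf : ContinuousAt f x) (hs : ∀ y ≠ x, f y ∈ s) : f x ∈ closure s := by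
  have hx : x ∈ closure {x}ᶜ := by rw [closure_compl_singleton]; trivial
  exact closure_mono (Set.image_subset_iff.2 hs) (hf.continuousWithinAt.mem_closure_image hx)

def wCurve (ε : ℂ) : T3 2 2 2 := fun i j k =>
  if (i : ℕ) + j + k = 0 then 0 else ε ^ ((i : ℕ) + j + k - 1)

theorem wCurve_zero : wCurve 0 = W := by
  funext i j k
  fin_cases i <;> fin_cases j <;> fin_cases k <;> simp [wCurve, W]

theorem continuous_wCurve : Continuous wCurve :=
  continuous_pi fun _ => continuous_pi fun _ => continuous_pi fun _ => by
    simp only [wCurve]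
    split_ifs <;> fun_prop

theorem wCurve_mem_rankLE_two {ε : ℂ} (hε : ε ≠ 0) : wCurve ε ∈ RankLE 2 := by
  refine ⟨![![1, ε], ![1, 0]], ![![1, ε], ![1, 0]], ![![ε⁻¹, 1], ![-ε⁻¹, 0]], fun i j k => ?_⟩
  fin_cases i <;> fin_cases j <;> fin_cases k <;> simp [wCurve, Fin.sum_univ_two] <;> field_simp

theorem W_mem_closure_rankLE_two : W ∈ closure (RankLE 2) :=
  wCurve_zero ▸ mem_closure_of_continuousAt_of_forall_ne continuous_wCurve.continuousAt
    fun _ => wCurve_mem_rankLE_two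

def slice {a b c : ℕ} (t : T3 a b c) (k : Fin c) : Matrix (Fin a) (Fin b) ℂ :=
  of fun i j => t i j k

theorem exists_slice_eq_mul_diagonal_mul_of_mem_rankLE {r : ℕ} {t : T3 2 2 2}
    (ht : t ∈ RankLE r) :
    ∃ (A : Matrix (Fin 2) (Fin r) ℂ) (B : Matrix (Fin r) (Fin 2) ℂ) (c : Fin r → Fin 2 → ℂ),
      ∀ k, slice t k = A * diagonal (fun l => c l k) * B := by
  obtain ⟨a, b, c, h⟩ := ht
  exact ⟨(of a)ᵀ, of b, c, fun k => by ext i j; rw [mul_apply]; simp [slice, h, mul_right_comm]⟩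

theorem slice_one_eq_zero_of_mem_rankLE_two {t : T3 2 2 2} (ht : t ∈ RankLE 2)
    (h₀ : (slice t 0).det ≠ 0) (h : slice t 1 * (slice t 0)⁻¹ * slice t 1 = 0) :
    slice t 1 = 0 := by
  obtain ⟨A, B, c, hs⟩ := exists_slice_eq_mul_diagonal_mul_of_mem_rankLE ht
  simp only [hs] at h₀ h ⊢
  exact mul_diagonal_mul_eq_zero_of_mul_inv_mul_eq_zero h₀ h

theorem slice_W_zero : slice W 0 = !![0, 1; 1, 0] := by
  ext i j; fin_cases i <;> fin_cases j <;> simp [slice, W]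

theorem slice_W_one : slice W 1 = !![1, 0; 0, 0] := by
  ext i j; fin_cases i <;> fin_cases j <;> simp [slice, W]

theorem W_not_mem_rankLE_two : W ∉ RankLE 2 := by
  intro hW
  have hinv : (slice W 0)⁻¹ = slice W 0 := inv_eq_left_inv (by simp [slice_W_zero, one_fin_two])
  have hnil : slice W 1 * (slice W 0)⁻¹ * slice W 1 = 0 := by
    rw [hinv, slice_W_zero, slice_W_one]
    ext i j; fin_cases i <;> fin_cases j <;> simp
  have hzero := slice_one_eq_zero_of_mem_rankLE_two hW (by simp [slice_W_zero]) hnil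
  simpa [slice_W_one] using congrFun (congrFun hzero 0) 0

theorem W_mem_rankLE_three : W ∈ RankLE 3 := by
  refine ⟨![![1, 0], ![1, 0], ![0, 1]], ![![1, 0], ![0, 1], ![1, 0]],
    ![![0, 1], ![1, 0], ![1, 0]], fun i j k => ?_⟩
  fin_cases i <;> fin_cases j <;> fin_cases k <;> simp [W, Fin.sum_univ_three]

/-- the border rank of W is 2: W lies in the closure of the rank-≤2
tensors, is not itself of rank ≤ 2, but has rank ≤ 3 (hence rank 3 and border
rank strictly below rank). -/
theorem borderRank_W :
    W ∈ closure (RankLE 2) ∧ W ∉ RankLE 2 ∧ W ∈ RankLE 3 :=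
  ⟨W_mem_closure_rankLE_two, W_not_mem_rankLE_two, W_mem_rankLE_three⟩
end
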